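/- The number of permutations in S_n avoiding the patterns 132, 213, and 2341 equals f_{n+2} − 1 for all n ≥ 1, where f_n is the n-th Fibonacci number (f_1 = f_2 = 1). -/

import Mathlib

/-- `σ` contains the pattern `p` (given as a sequence of values). -/
def PermContains {n k : ℕ} (σ : Equiv.Perm (Fin n)) (p : Fin k → Fin k) : Prop :=
  ∃ f : Fin k → Fin n, StrictMono f ∧ ∀ i j : Fin k, p i < p j ↔ σ (f i) < σ (f j)

/-- `σ` avoids the pattern `p`. -/
def PermAvoids {n k : ℕ} (σ : Equiv.Perm (Fin n)) (p : Fin k → Fin k) : Prop :=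
  ¬ PermContains σ p

def p123 : Fin 3 → Fin 3 := ![0, 1, 2]
def p132 : Fin 3 → Fin 3 := ![0, 2, 1]
def p213 : Fin 3 → Fin 3 := ![1, 0, 2]
def p231 : Fin 3 → Fin 3 := ![1, 2, 0]
def p312 : Fin 3 → Fin 3 := ![2, 0, 1]
def p321 : Fin 3 → Fin 3 := ![2, 1, 0]

/-- the list `a, a-1, ..., b` (empty if `b > a`). -/
def descList (a b : ℕ) : List ℕ := (List.range (a + 1 - b)).map (fun j => a - j)

/-- the list `a, a+1, ..., b` (empty if `b > a`). -/
def ascList (a b : ℕ) : List ℕ := (List.range (b + 1 - a)).map (fun j => a + j)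

/-!
Let `σ` avoid 132, 213 and 2341. If `σ 0` is the smallest value, avoiding 132 makes `σ` the
identity. If `σ 0` is neither the smallest nor the largest value, avoiding 213 forces
`σ 0 < σ 1` and places the smallest value after the largest one; avoiding 2341 then makes `σ 1`
the largest value, and avoiding 132 makes `σ 0` the second largest. Conversely, putting a new
largest value, or the two new largest values in the order "second largest, largest", in front of
a permutation creates none of the three patterns, since each pattern rises above its first entry
at its third entry. So the counts satisfy `a (n + 3) = a (n + 2) + a (n + 1) + 1` with
`a 1 = 1`, `a 2 = 2`, that is, `a n + 1 = fib (n + 2)`.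
-/

open Equiv

lemma Fin.val_le_val_of_strictMono {m n : ℕ} {f : Fin (m + 1) → Fin n} (hf : StrictMono f)
    (i : Fin (m + 1)) : i.val ≤ (f i).val := by
  induction i using Fin.inductionOn with
  | zero => exact Nat.zero_le _
  | succ i ih => exact Nat.succ_le_of_lt (ih.trans_lt (hf i.castSucc_lt_succ))

lemma Fin.one_lt_of_ne_zero_of_ne_one {n : ℕ} {x : Fin (n + 2)} (h₀ : x ≠ 0) (h₁ : x ≠ 1) :
    1 < x := by
  rw [Fin.ne_iff_vne] at h₀ h₁
  rw [Fin.lt_def]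
  simp only [Fin.val_zero, Fin.val_one] at h₀ h₁ ⊢
  omega

section Patterns

variable {n : ℕ} {σ : Perm (Fin n)}

lemma permContains_p132 {i j k : Fin n} (hij : i < j) (hjk : j < k)
    (h₁ : σ i < σ k) (h₂ : σ k < σ j) : PermContains σ p132 := by
  refine ⟨![i, j, k], ?_, ?_⟩
  · simp [Fin.strictMono_iff_lt_succ, Fin.forall_fin_succ, hij, hjk]
  · intro a b
    fin_cases a <;> fin_cases b <;> simp [p132] <;> order

lemma permContains_p213 {i j k : Fin n} (hij : i < j) (hjk : j < k)
    (h₁ : σ j < σ i) (h₂ : σ i < σ k) : PermContains σ p213 := by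
  refine ⟨![i, j, k], ?_, ?_⟩
  · simp [Fin.strictMono_iff_lt_succ, Fin.forall_fin_succ, hij, hjk]
  · intro a b
    fin_cases a <;> fin_cases b <;> simp [p213] <;> order

lemma permContains_p2341 {i j k l : Fin n} (hij : i < j) (hjk : j < k) (hkl : k < l)
    (h₁ : σ l < σ i) (h₂ : σ i < σ j) (h₃ : σ j < σ k) :
    PermContains σ (![1, 2, 3, 0] : Fin 4 → Fin 4) := by
  refine ⟨![i, j, k, l], ?_, ?_⟩
  · simp [Fin.strictMono_iff_lt_succ, Fin.forall_fin_succ, hij, hjk, hkl]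
  · intro a b
    fin_cases a <;> fin_cases b <;> simp <;> order

lemma permAvoids_one {k : ℕ} {p : Fin k → Fin k} {a b : Fin k} (hab : a < b)
    (hp : p b < p a) : PermAvoids (1 : Perm (Fin n)) p := fun ⟨_, hf, hfp⟩ =>
  (hf hab).asymm ((hfp b a).1 hp)

lemma permAvoids_of_lt {k : ℕ} (p : Fin k → Fin k) (h : n < k) : PermAvoids σ p :=
  fun ⟨f, hf, _⟩ => h.not_ge (Fin.le_of_injective f hf.injective)

end Patterns

section ConsAt

variable {n : ℕ}

/-- In one-line notation, `consAt v τ` is `v` followed by the entries of `τ`, each shifted up by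
one if it is at least `v`. -/
def consAt (v : Fin (n + 1)) (τ : Perm (Fin n)) : Perm (Fin (n + 1)) :=
  (finSuccEquiv n).trans (τ.optionCongr.trans (finSuccEquiv' v).symm)

@[simp] lemma consAt_zero (v : Fin (n + 1)) (τ : Perm (Fin n)) : consAt v τ 0 = v := by
  simp [consAt]

@[simp] lemma consAt_succ (v : Fin (n + 1)) (τ : Perm (Fin n)) (a : Fin n) :
    consAt v τ a.succ = v.succAbove (τ a) := by
  simp [consAt]

lemma consAt_injective (v : Fin (n + 1)) : Function.Injective (consAt v) := fun τ₁ τ₂ h =>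
  Equiv.ext fun a => by simpa using congr($h a.succ)

lemma exists_consAt_eq (σ : Perm (Fin (n + 1))) : ∃ τ, consAt (σ 0) τ = σ := by
  set ρ : Perm (Option (Fin n)) := (finSuccEquiv n).symm.trans (σ.trans (finSuccEquiv' (σ 0)))
  have hρ : ρ = (removeNone ρ).optionCongr := by
    conv_lhs => rw [← Perm.decomposeOption.symm_apply_apply ρ]
    simp [ρ, Perm.one_def]
  refine ⟨removeNone ρ, ?_⟩
  rw [consAt, ← hρ]
  ext x
  simp [ρ]

lemma permContains_consAt {k : ℕ} {p : Fin k → Fin k} {τ : Perm (Fin n)} (v : Fin (n + 1))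
    (h : PermContains τ p) : PermContains (consAt v τ) p := by
  obtain ⟨f, hf, hfp⟩ := h
  exact ⟨fun i => (f i).succ, Fin.strictMono_succ.comp hf, by
    simpa [Fin.succAbove_lt_succAbove_iff] using hfp⟩

lemma permContains_of_permContains_consAt {m k : ℕ} {p : Fin (m + 1) → Fin (m + 1)}
    {v : Fin (n + 1)} {τ : Perm (Fin n)} (hv : ∀ x : Fin (n + 1), k < x.val → consAt v τ x < v)
    {j : Fin (m + 1)} (hj : k < j.val) (hp : p 0 < p j) (h : PermContains (consAt v τ) p) :
    PermContains τ p := by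
  obtain ⟨f, hf, hfp⟩ := h
  have hf0 : ∀ i, f i ≠ 0 := by
    intro i hi
    have h0 : f 0 = 0 := nonpos_iff_eq_zero.1 (hi ▸ hf.monotone (Fin.zero_le i))
    have hlt : consAt v τ (f j) < consAt v τ (f 0) := by
      rw [h0, consAt_zero]
      exact hv (f j) (hj.trans_le (Fin.val_le_val_of_strictMono hf j))
    exact ((hfp 0 j).1 hp).asymm hlt
  choose g hg using fun i => Fin.exists_succ_eq.2 (hf0 i)
  obtain rfl : f = fun i => (g i).succ := funext fun i => (hg i).symm
  exact ⟨g, fun a b hab => Fin.succ_lt_succ_iff.1 (hf hab), by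
    simpa [Fin.succAbove_lt_succAbove_iff] using hfp⟩

def consMax (τ : Perm (Fin n)) : Perm (Fin (n + 1)) := consAt (Fin.last n) τ

def consMax₂ (τ : Perm (Fin n)) : Perm (Fin (n + 2)) :=
  consAt (Fin.last n).castSucc (consMax τ)

@[simp] lemma consMax_zero (τ : Perm (Fin n)) : consMax τ 0 = Fin.last n := consAt_zero _ _

@[simp] lemma consMax₂_zero (τ : Perm (Fin n)) : consMax₂ τ 0 = (Fin.last n).castSucc :=
  consAt_zero _ _

lemma consMax_injective : Function.Injective (consMax (n := n)) := consAt_injective _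

lemma consMax₂_injective : Function.Injective (consMax₂ (n := n)) :=
  (consAt_injective _).comp consMax_injective

lemma permContains_consMax_iff {m : ℕ} {p : Fin (m + 1) → Fin (m + 1)} {τ : Perm (Fin n)}
    {j : Fin (m + 1)} (hj : 0 < j.val) (hp : p 0 < p j) :
    PermContains (consMax τ) p ↔ PermContains τ p := by
  refine ⟨permContains_of_permContains_consAt (fun x hx => ?_) hj hp, permContains_consAt _⟩
  obtain ⟨a, rfl⟩ := Fin.exists_succ_eq.2 (Fin.pos_iff_ne_zero.1 hx)
  simp [Fin.castSucc_lt_last]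

lemma permContains_consMax₂_iff {m : ℕ} {p : Fin (m + 1) → Fin (m + 1)} {τ : Perm (Fin n)}
    {j : Fin (m + 1)} (hj : 1 < j.val) (hp : p 0 < p j) :
    PermContains (consMax₂ τ) p ↔ PermContains τ p := by
  rw [← permContains_consMax_iff (τ := τ) (by omega) hp]
  refine ⟨permContains_of_permContains_consAt (fun x hx => ?_) hj hp, permContains_consAt _⟩
  obtain ⟨a, rfl⟩ : ∃ a : Fin n, x = a.succ.succ :=
    ⟨⟨x.val - 2, by omega⟩, by ext; simp; omega⟩
  simp [consMax, Fin.succAbove_of_castSucc_lt, Fin.castSucc_lt_last]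

lemma exists_consMax_eq {σ : Perm (Fin (n + 1))} (h : σ 0 = Fin.last n) :
    ∃ τ, consMax τ = σ := by
  obtain ⟨τ, hτ⟩ := exists_consAt_eq σ
  exact ⟨τ, by rwa [h] at hτ⟩

lemma exists_consMax₂_eq {σ : Perm (Fin (n + 2))} (h₀ : σ 0 = (Fin.last n).castSucc)
    (h₁ : σ 1 = Fin.last (n + 1)) : ∃ τ, consMax₂ τ = σ := by
  obtain ⟨ρ, hρ⟩ := exists_consAt_eq σ
  rw [h₀] at hρ
  have hρ₀ : ρ 0 = Fin.last n := by
    rw [← hρ, ← Fin.succ_zero_eq_one, consAt_succ, ← Fin.succ_last,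
      ← Fin.succAbove_castSucc_self] at h₁
    exact Fin.succAbove_right_injective h₁
  obtain ⟨τ, rfl⟩ := exists_consMax_eq hρ₀
  exact ⟨τ, hρ⟩

end ConsAt

lemma eq_one_of_apply_zero_eq_zero {n : ℕ} {σ : Perm (Fin (n + 1))} (h132 : PermAvoids σ p132)
    (h₀ : σ 0 = 0) : σ = 1 := by
  have hpos : ∀ {j}, 0 < j → σ 0 < σ j := fun hj => by
    rw [h₀, Fin.pos_iff_ne_zero, ← h₀]
    exact σ.injective.ne hj.ne'
  have hmono : StrictMono σ := by
    intro i j hij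
    rcases (Fin.zero_le i).eq_or_lt with rfl | hi
    · exact hpos hij
    by_contra! hji
    exact h132 (permContains_p132 hi hij (hpos (hi.trans hij))
      (hji.lt_of_ne (σ.injective.ne hij.ne')))
  exact Equiv.ext (congrFun hmono.eq_id)

section Classification

variable {n : ℕ} {σ : Perm (Fin (n + 2))}

lemma apply_zero_lt_apply_one (h213 : PermAvoids σ p213) (hlast : σ 0 ≠ Fin.last (n + 1)) :
    σ 0 < σ 1 := by
  obtain ⟨q, hq⟩ := σ.surjective (Fin.last (n + 1))
  by_contra! h₁
  replace h₁ : σ 1 < σ 0 := h₁.lt_of_ne (σ.injective.ne Fin.zero_lt_one.ne')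
  have hq₁ : 1 < q := Fin.one_lt_of_ne_zero_of_ne_one (by rintro rfl; exact hlast hq)
    (by rintro rfl; exact (h₁.trans_le (hq ▸ Fin.le_last _)).ne' rfl)
  exact h213 (permContains_p213 Fin.zero_lt_one hq₁ h₁ (hq ▸ Fin.lt_last_iff_ne_last.2 hlast))

lemma apply_one_eq_last (h213 : PermAvoids σ p213)
    (h2341 : PermAvoids σ (![1, 2, 3, 0] : Fin 4 → Fin 4)) (h₀ : σ 0 ≠ 0)
    (hlast : σ 0 ≠ Fin.last (n + 1)) : σ 1 = Fin.last (n + 1) := by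
  obtain ⟨q, hq⟩ := σ.surjective (Fin.last (n + 1))
  obtain ⟨s, hs⟩ := σ.surjective 0
  by_contra h₁
  have hq₁ : 1 < q := Fin.one_lt_of_ne_zero_of_ne_one (by rintro rfl; exact hlast hq)
    (by rintro rfl; exact h₁ hq)
  have hs₀ : σ s < σ 0 := hs ▸ Fin.pos_iff_ne_zero.2 h₀
  have hqs : q < s := by
    by_contra! hsq
    replace hsq : s < q := hsq.lt_of_ne (by rintro rfl; exact Fin.last_pos.ne (hs ▸ hq))
    exact h213 (permContains_p213 (Fin.pos_iff_ne_zero.2 (by rintro rfl; exact h₀ hs)) hsq hs₀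
      (hq ▸ Fin.lt_last_iff_ne_last.2 hlast))
  exact h2341 (permContains_p2341 Fin.zero_lt_one hq₁ hqs hs₀
    (apply_zero_lt_apply_one h213 hlast) (hq ▸ Fin.lt_last_iff_ne_last.2 h₁))

lemma apply_zero_eq_castSucc_last (h132 : PermAvoids σ p132) (hlast : σ 0 ≠ Fin.last (n + 1))
    (h₁ : σ 1 = Fin.last (n + 1)) : σ 0 = (Fin.last n).castSucc := by
  obtain ⟨r, hr⟩ := σ.surjective (Fin.last n).castSucc
  by_contra h₀
  have h₀r : σ 0 < σ r := by
    refine hr ▸ (Fin.le_castSucc_iff.2 ?_).lt_of_ne h₀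
    rw [Fin.succ_last]
    exact Fin.lt_last_iff_ne_last.2 hlast
  have hr₁ : 1 < r := Fin.one_lt_of_ne_zero_of_ne_one (by rintro rfl; exact h₀ hr)
    (by rintro rfl; exact (Fin.castSucc_lt_last _).ne (hr.symm.trans h₁))
  exact h132 (permContains_p132 Fin.zero_lt_one hr₁ h₀r (hr ▸ h₁ ▸ Fin.castSucc_lt_last _))

end Classification

def av (n : ℕ) : Set (Perm (Fin n)) :=
  {σ | PermAvoids σ p132 ∧ PermAvoids σ p213 ∧ PermAvoids σ (![1, 2, 3, 0] : Fin 4 → Fin 4)}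

section Av

variable {n : ℕ}

lemma one_mem_av : (1 : Perm (Fin n)) ∈ av n :=
  ⟨permAvoids_one (a := 1) (b := 2) (by decide) (by decide),
    permAvoids_one (a := 0) (b := 1) (by decide) (by decide),
    permAvoids_one (a := 0) (b := 3) (by decide) (by decide)⟩

lemma av_eq_univ_of_le_two (hn : n ≤ 2) : av n = Set.univ :=
  Set.eq_univ_of_forall fun _ => ⟨permAvoids_of_lt _ (by omega), permAvoids_of_lt _ (by omega),
    permAvoids_of_lt _ (by omega)⟩

lemma consMax_mem_av_iff {τ : Perm (Fin n)} : consMax τ ∈ av (n + 1) ↔ τ ∈ av n := by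
  simp only [av, Set.mem_ofPred_eq, PermAvoids,
    permContains_consMax_iff (p := p132) (j := 2) (by decide) (by decide),
    permContains_consMax_iff (p := p213) (j := 2) (by decide) (by decide),
    permContains_consMax_iff (p := ![1, 2, 3, 0]) (j := 2) (by decide) (by decide)]

lemma consMax₂_mem_av_iff {τ : Perm (Fin n)} : consMax₂ τ ∈ av (n + 2) ↔ τ ∈ av n := by
  simp only [av, Set.mem_ofPred_eq, PermAvoids,
    permContains_consMax₂_iff (p := p132) (j := 2) (by decide) (by decide),
    permContains_consMax₂_iff (p := p213) (j := 2) (by decide) (by decide),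
    permContains_consMax₂_iff (p := ![1, 2, 3, 0]) (j := 2) (by decide) (by decide)]

lemma av_add_two_cases {σ : Perm (Fin (n + 2))} (hσ : σ ∈ av (n + 2)) :
    σ = 1 ∨ σ 0 = Fin.last (n + 1) ∨
      (σ 0 = (Fin.last n).castSucc ∧ σ 1 = Fin.last (n + 1)) := by
  obtain ⟨h132, h213, h2341⟩ := hσ
  by_cases h₀ : σ 0 = 0
  · exact .inl (eq_one_of_apply_zero_eq_zero h132 h₀)
  by_cases hlast : σ 0 = Fin.last (n + 1)
  · exact .inr (.inl hlast)
  have h₁ := apply_one_eq_last h213 h2341 h₀ hlast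
  exact .inr (.inr ⟨apply_zero_eq_castSucc_last h132 hlast h₁, h₁⟩)

lemma av_add_three : av (n + 3) = insert 1 (consMax '' av (n + 2) ∪ consMax₂ '' av (n + 1)) := by
  ext σ
  constructor
  · intro hσ
    rcases av_add_two_cases hσ with rfl | hlast | ⟨h₀, h₁⟩
    · exact .inl rfl
    · obtain ⟨τ, rfl⟩ := exists_consMax_eq hlast
      exact .inr (.inl ⟨τ, consMax_mem_av_iff.1 hσ, rfl⟩)
    · obtain ⟨τ, rfl⟩ := exists_consMax₂_eq h₀ h₁
      exact .inr (.inr ⟨τ, consMax₂_mem_av_iff.1 hσ, rfl⟩)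
  · rintro (rfl | ⟨τ, hτ, rfl⟩ | ⟨τ, hτ, rfl⟩)
    · exact one_mem_av
    · exact consMax_mem_av_iff.2 hτ
    · exact consMax₂_mem_av_iff.2 hτ

lemma ncard_av_add_three :
    (av (n + 3)).ncard = (av (n + 2)).ncard + (av (n + 1)).ncard + 1 := by
  have hdisj : Disjoint (consMax '' av (n + 2)) (consMax₂ '' av (n + 1)) := by
    rw [Set.disjoint_left]
    rintro _ ⟨τ, -, rfl⟩ ⟨τ', -, h⟩
    simpa [Fin.ext_iff] using congr($h 0)
  have hone : (1 : Perm (Fin (n + 3))) ∉ consMax '' av (n + 2) ∪ consMax₂ '' av (n + 1) := by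
    rintro (⟨τ, -, h⟩ | ⟨τ, -, h⟩) <;> simpa [Fin.ext_iff] using congr($h 0)
  rw [av_add_three, Set.ncard_insert_of_notMem hone, Set.ncard_union_eq hdisj,
    Set.ncard_image_of_injective _ consMax_injective,
    Set.ncard_image_of_injective _ consMax₂_injective]

lemma ncard_av_add_one (n : ℕ) : (av (n + 1)).ncard + 1 = Nat.fib (n + 3) := by
  induction n using Nat.twoStepInduction with
  | zero => simp [av_eq_univ_of_le_two, Set.ncard_univ, Nat.fib_add_two]
  | one => simp [av_eq_univ_of_le_two, Set.ncard_univ, Fintype.card_perm, Nat.fib_add_two]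
  | more n ih₁ ih₂ =>
    change (av (n + 2)).ncard + 1 = Nat.fib (n + 3 + 1) at ih₂
    change (av (n + 3)).ncard + 1 = Nat.fib (n + 3 + 2)
    rw [ncard_av_add_three, Nat.fib_add_two]
    omega

end Av

theorem stmt12 :
    ∀ n, 1 ≤ n → Nat.card {σ : Equiv.Perm (Fin n) //
      PermAvoids σ p132 ∧ PermAvoids σ p213 ∧ PermAvoids σ (![1, 2, 3, 0] : Fin 4 → Fin 4)}
      = Nat.fib (n + 2) - 1 := by
  intro n hn
  obtain ⟨n, rfl⟩ := Nat.exists_eq_add_of_le' hn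
  exact (Nat.card_coe_set_eq (av (n + 1))).trans (Nat.eq_sub_of_add_eq (ncard_av_add_one n))
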